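/- arXiv:2407.20027 — 4 statements merged into one kernel-verified Lean document; each statement's English description precedes it below -/
import Mathlib

section
/- Let V_L, V_R be random elements and S_0, S_j be {0,1}-valued random variables on a probability space. If (i) S_0 is conditionally independent of V_L given (V_R, S_j = 1), and (ii) S_j is conditionally independent of V_L given (V_R, S_0 = 1), then for all values v_L, v_R with the relevant conditioning events having positive probability, P[V_L = v_L | V_R = v_R, S_j = 1] = P[V_L = v_L | V_R = v_R, S_0 = 1]. -/
open MeasureTheory BigOperators

variable {Ω : Type*} [MeasurableSpace Ω]

/-- Probability of an event (as a real number). -/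
noncomputable def pr (μ : Measure Ω) (A : Set Ω) : ℝ := (μ A).toReal

/-- Conditional probability of `A` given `B`. -/
noncomputable def cpr (μ : Measure Ω) (A B : Set Ω) : ℝ := pr μ (A ∩ B) / pr μ B

lemma pr_mono (μ : Measure Ω) [IsProbabilityMeasure μ] {A B : Set Ω} (h : A ⊆ B) :
    pr μ A ≤ pr μ B :=
  ENNReal.toReal_mono (measure_ne_top μ B) (measure_mono h)

/-- Key lemma: if A ⫫ S given B (in the factorized form) and P(B ∩ S) > 0,
then P(A | B ∩ S) = P(A | B). -/
lemma cond_drop (μ : Measure Ω) [IsProbabilityMeasure μ] (A S B : Set Ω)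
    (hpos : pr μ (B ∩ S) > 0)
    (hci : cpr μ (S ∩ A) B = cpr μ S B * cpr μ A B) :
    cpr μ A (B ∩ S) = cpr μ A B := by
  have hB : pr μ B > 0 := lt_of_lt_of_le hpos (pr_mono μ Set.inter_subset_left)
  have e1 : S ∩ A ∩ B = A ∩ (B ∩ S) := by ext ω; simp [Set.mem_inter_iff]; tauto
  have e2 : S ∩ B = B ∩ S := Set.inter_comm _ _
  unfold cpr at hci ⊢
  rw [e1, e2] at hci
  have hBne : pr μ B ≠ 0 := ne_of_gt hB
  have hSne : pr μ (B ∩ S) ≠ 0 := ne_of_gt hpos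
  field_simp at hci ⊢
  have key : pr μ (A ∩ (B ∩ S)) * pr μ B = pr μ (B ∩ S) * pr μ (A ∩ B) :=
    mul_right_cancel₀ hBne (by rw [hci])
  linarith [key]

/-- Theorem 1 (identification between samples): if S0 ⫫ V_L | (V_R, Sj = 1) and
Sj ⫫ V_L | (V_R, S0 = 1), then P[V_L = vL | V_R = vR, Sj = 1] = P[V_L = vL | V_R = vR, S0 = 1]. -/
theorem identification_between_samples {α β : Type*} (μ : Measure Ω) [IsProbabilityMeasure μ]
    (VL : Ω → α) (VR : Ω → β) (S0 Sj : Ω → Bool)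
    (h1 : ∀ (s : Bool) (vL : α) (vR : β),
      pr μ ({ω | VR ω = vR} ∩ {ω | Sj ω = true}) > 0 →
      cpr μ ({ω | S0 ω = s} ∩ {ω | VL ω = vL}) ({ω | VR ω = vR} ∩ {ω | Sj ω = true})
        = cpr μ {ω | S0 ω = s} ({ω | VR ω = vR} ∩ {ω | Sj ω = true})
          * cpr μ {ω | VL ω = vL} ({ω | VR ω = vR} ∩ {ω | Sj ω = true}))
    (h2 : ∀ (s : Bool) (vL : α) (vR : β),
      pr μ ({ω | VR ω = vR} ∩ {ω | S0 ω = true}) > 0 →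
      cpr μ ({ω | Sj ω = s} ∩ {ω | VL ω = vL}) ({ω | VR ω = vR} ∩ {ω | S0 ω = true})
        = cpr μ {ω | Sj ω = s} ({ω | VR ω = vR} ∩ {ω | S0 ω = true})
          * cpr μ {ω | VL ω = vL} ({ω | VR ω = vR} ∩ {ω | S0 ω = true})) :
    ∀ (vL : α) (vR : β),
      pr μ ({ω | VR ω = vR} ∩ {ω | Sj ω = true}) > 0 →
      pr μ ({ω | VR ω = vR} ∩ {ω | S0 ω = true}) > 0 →
      pr μ ({ω | VR ω = vR} ∩ {ω | Sj ω = true} ∩ {ω | S0 ω = true}) > 0 →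
      cpr μ {ω | VL ω = vL} ({ω | VR ω = vR} ∩ {ω | Sj ω = true})
        = cpr μ {ω | VL ω = vL} ({ω | VR ω = vR} ∩ {ω | S0 ω = true}) := by
  intro vL vR hj h0 hj0
  set R := {ω | VR ω = vR}
  set A := {ω | VL ω = vL}
  set Bj := {ω | Sj ω = true}
  set B0 := {ω | S0 ω = true}
  have hswap : R ∩ B0 ∩ Bj = R ∩ Bj ∩ B0 := Set.inter_right_comm R B0 Bj
  have k1 : cpr μ A (R ∩ Bj ∩ B0) = cpr μ A (R ∩ Bj) :=
    cond_drop μ A B0 (R ∩ Bj) hj0 (h1 true vL vR hj)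
  have k2 : cpr μ A (R ∩ B0 ∩ Bj) = cpr μ A (R ∩ B0) :=
    cond_drop μ A Bj (R ∩ B0) (by rwa [hswap]) (h2 true vL vR h0)
  rw [← k1, ← k2, hswap]
end

section
/- Let A, Y, S be {0,1}-valued random variables and K a discrete random variable. Assume: (i) S ⫫ A | (Y, K); (ii) for each b in {0,1}, Y^b is a {0,1}-valued potential outcome with Y = Y^b on {A = b}; (iii) exchangeability: Y^b ⫫ A | K for each b. Then for each k such that all relevant conditional probabilities are strictly between 0 and 1, the causal odds ratio (P[Y^1=1|K=k]/P[Y^1=0|K=k]) / (P[Y^0=1|K=k]/P[Y^0=0|K=k]) equals the within-sample exposure odds ratio (P[A=1|Y=1,K=k,S=1]/P[A=0|Y=1,K=k,S=1]) / (P[A=1|Y=0,K=k,S=1]/P[A=0|Y=0,K=k,S=1]). -/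
open MeasureTheory BigOperators

variable {Ω : Type*} [MeasurableSpace Ω]

/-- Sufficiency of the separable case-control condition: the conditional causal odds ratio
equals the within-sample exposure odds ratio. -/
theorem case_control_identification {κ : Type*} (μ : Measure Ω) [IsProbabilityMeasure μ]
    (A Y S : Ω → Bool) (K : Ω → κ) (Yb : Bool → Ω → Bool)
    (hCI : ∀ (s a y : Bool) (k : κ),
      pr μ ({ω | Y ω = y} ∩ {ω | K ω = k}) > 0 →
      cpr μ ({ω | S ω = s} ∩ {ω | A ω = a}) ({ω | Y ω = y} ∩ {ω | K ω = k})
        = cpr μ {ω | S ω = s} ({ω | Y ω = y} ∩ {ω | K ω = k})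
          * cpr μ {ω | A ω = a} ({ω | Y ω = y} ∩ {ω | K ω = k}))
    (hconsist : ∀ (b : Bool) (ω : Ω), A ω = b → Y ω = Yb b ω)
    (hexch : ∀ (b a y : Bool) (k : κ), pr μ {ω | K ω = k} > 0 →
      cpr μ ({ω | Yb b ω = y} ∩ {ω | A ω = a}) {ω | K ω = k}
        = cpr μ {ω | Yb b ω = y} {ω | K ω = k} * cpr μ {ω | A ω = a} {ω | K ω = k}) :
    ∀ (k : κ),
      (∀ (a y : Bool),
        pr μ ({ω | A ω = a} ∩ {ω | Y ω = y} ∩ {ω | K ω = k} ∩ {ω | S ω = true}) > 0) →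
      (∀ (a y : Bool), pr μ ({ω | A ω = a} ∩ {ω | Y ω = y} ∩ {ω | K ω = k}) > 0) →
      (∀ (b y : Bool), cpr μ {ω | Yb b ω = y} {ω | K ω = k} > 0) →
      (cpr μ {ω | Yb true ω = true} {ω | K ω = k}
          / cpr μ {ω | Yb true ω = false} {ω | K ω = k})
        / (cpr μ {ω | Yb false ω = true} {ω | K ω = k}
          / cpr μ {ω | Yb false ω = false} {ω | K ω = k})
      = (cpr μ {ω | A ω = true} ({ω | Y ω = true} ∩ {ω | K ω = k} ∩ {ω | S ω = true})
          / cpr μ {ω | A ω = false} ({ω | Y ω = true} ∩ {ω | K ω = k} ∩ {ω | S ω = true}))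
        / (cpr μ {ω | A ω = true} ({ω | Y ω = false} ∩ {ω | K ω = k} ∩ {ω | S ω = true})
          / cpr μ {ω | A ω = false} ({ω | Y ω = false} ∩ {ω | K ω = k} ∩ {ω | S ω = true})) := by
  intro k hS hP hQ
  have hKpos : 0 < pr μ {ω | K ω = k} :=
    lt_of_lt_of_le (hP true true)
      (pr_mono μ (fun ω hω => hω.2))
  have hYK : ∀ y : Bool, 0 < pr μ ({ω | Y ω = y} ∩ {ω | K ω = k}) := fun y =>
    lt_of_lt_of_le (hP true y) (pr_mono μ (fun ω hω => ⟨hω.1.2, hω.2⟩))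
  have hR : ∀ a : Bool, 0 < cpr μ {ω | A ω = a} {ω | K ω = k} := fun a =>
    div_pos (lt_of_lt_of_le (hP a true) (pr_mono μ (fun ω hω => ⟨hω.1.1, hω.2⟩))) hKpos
  have hsets : ∀ a y : Bool,
      ({ω | Yb a ω = y} ∩ {ω | A ω = a}) ∩ {ω | K ω = k}
        = ({ω | A ω = a} ∩ {ω | Y ω = y}) ∩ {ω | K ω = k} := by
    intro a y
    ext ω
    simp only [Set.mem_inter_iff, Set.mem_setOf_eq]
    constructor
    · rintro ⟨⟨h1, h2⟩, h3⟩
      exact ⟨⟨h2, by rw [hconsist a ω h2]; exact h1⟩, h3⟩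
    · rintro ⟨⟨h1, h2⟩, h3⟩
      exact ⟨⟨by rw [← hconsist a ω h1]; exact h2, h1⟩, h3⟩
  have keyP : ∀ a y : Bool,
      pr μ (({ω | A ω = a} ∩ {ω | Y ω = y}) ∩ {ω | K ω = k})
        = cpr μ {ω | Yb a ω = y} {ω | K ω = k} * cpr μ {ω | A ω = a} {ω | K ω = k}
            * pr μ {ω | K ω = k} := by
    intro a y
    have h := hexch a a y k hKpos
    rw [← hsets a y]
    have hne : pr μ {ω | K ω = k} ≠ 0 := hKpos.ne'
    have : pr μ (({ω | Yb a ω = y} ∩ {ω | A ω = a}) ∩ {ω | K ω = k})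
        = cpr μ ({ω | Yb a ω = y} ∩ {ω | A ω = a}) {ω | K ω = k} * pr μ {ω | K ω = k} := by
      unfold cpr
      field_simp
    rw [this, h]
  have keyS : ∀ a y : Bool,
      pr μ ((({ω | A ω = a} ∩ {ω | Y ω = y}) ∩ {ω | K ω = k}) ∩ {ω | S ω = true})
        = cpr μ {ω | S ω = true} ({ω | Y ω = y} ∩ {ω | K ω = k})
            * pr μ (({ω | A ω = a} ∩ {ω | Y ω = y}) ∩ {ω | K ω = k}) := by
    intro a y
    have h := hCI true a y k (hYK y)
    have hset : ({ω | S ω = true} ∩ {ω | A ω = a}) ∩ ({ω | Y ω = y} ∩ {ω | K ω = k})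
        = (({ω | A ω = a} ∩ {ω | Y ω = y}) ∩ {ω | K ω = k}) ∩ {ω | S ω = true} := by
      ext ω; simp only [Set.mem_inter_iff, Set.mem_setOf_eq]; tauto
    have hset2 : {ω | A ω = a} ∩ ({ω | Y ω = y} ∩ {ω | K ω = k})
        = ({ω | A ω = a} ∩ {ω | Y ω = y}) ∩ {ω | K ω = k} := by
      rw [Set.inter_assoc]
    have hne : pr μ ({ω | Y ω = y} ∩ {ω | K ω = k}) ≠ 0 := (hYK y).ne'
    unfold cpr at h ⊢
    rw [hset, hset2] at h
    field_simp at h ⊢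
    linear_combination h
  have hD : ∀ y : Bool,
      0 < pr μ (({ω | Y ω = y} ∩ {ω | K ω = k}) ∩ {ω | S ω = true}) := fun y =>
    lt_of_lt_of_le (hS true y) (pr_mono μ (fun ω hω => ⟨⟨hω.1.1.2, hω.1.2⟩, hω.2⟩))
  have hc : ∀ y : Bool, 0 < cpr μ {ω | S ω = true} ({ω | Y ω = y} ∩ {ω | K ω = k}) := by
    intro y
    by_contra hcn
    push_neg at hcn
    have h1 := hS true y
    rw [keyS true y] at h1
    nlinarith [hP true y]
  have hcpr : ∀ a y : Bool,
      cpr μ {ω | A ω = a} (({ω | Y ω = y} ∩ {ω | K ω = k}) ∩ {ω | S ω = true})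
        = cpr μ {ω | S ω = true} ({ω | Y ω = y} ∩ {ω | K ω = k})
            * (cpr μ {ω | Yb a ω = y} {ω | K ω = k} * cpr μ {ω | A ω = a} {ω | K ω = k}
                * pr μ {ω | K ω = k})
          / pr μ (({ω | Y ω = y} ∩ {ω | K ω = k}) ∩ {ω | S ω = true}) := by
    intro a y
    have hset : {ω | A ω = a} ∩ (({ω | Y ω = y} ∩ {ω | K ω = k}) ∩ {ω | S ω = true})
        = (({ω | A ω = a} ∩ {ω | Y ω = y}) ∩ {ω | K ω = k}) ∩ {ω | S ω = true} := by
      ext ω; simp only [Set.mem_inter_iff, Set.mem_setOf_eq]; tauto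
    show pr μ _ / pr μ _ = _
    rw [hset, keyS a y, keyP a y]
  rw [hcpr true true, hcpr false true, hcpr true false, hcpr false false]
  have h1 := (hQ true true).ne'
  have h2 := (hQ true false).ne'
  have h3 := (hQ false true).ne'
  have h4 := (hQ false false).ne'
  have h5 := (hc true).ne'
  have h6 := (hc false).ne'
  have h7 := (hR true).ne'
  have h8 := (hR false).ne'
  have h9 := hKpos.ne'
  have h10 := (hD true).ne'
  have h11 := (hD false).ne'
  field_simp
end

section
/- Let S1, S2, Y1 be {0,1}-valued random variables and Y2^0 a {0,1}-valued potential outcome. Suppose Y2^0 is independent of the pair (S1, S2), the observed outcome Y2 satisfies Y2 = Y2^0 on the event {S1 = 0}, and P[S2 = 1, S1 = 0] > 0. Then P[Y2^0 = 1] = P[Y2 = 1 | S2 = 1, S1 = 0]. -/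
open MeasureTheory BigOperators

variable {Ω : Type*} [MeasurableSpace Ω]

/-- COVID screening example, untested arm: P[Y2^0 = 1] = P[Y2 = 1 | S2 = 1, S1 = 0]. -/
theorem covid_identification_untested (μ : Measure Ω) [IsProbabilityMeasure μ]
    (S1 S2 Y1 Y2 Y20 : Ω → Bool)
    (hindep : ∀ (y s1 s2 : Bool),
      pr μ ({ω | Y20 ω = y} ∩ ({ω | S1 ω = s1} ∩ {ω | S2 ω = s2}))
        = pr μ {ω | Y20 ω = y} * pr μ ({ω | S1 ω = s1} ∩ {ω | S2 ω = s2}))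
    (hconsist : ∀ ω, S1 ω = false → Y2 ω = Y20 ω)
    (hpos : pr μ ({ω | S2 ω = true} ∩ {ω | S1 ω = false}) > 0) :
    pr μ {ω | Y20 ω = true}
      = cpr μ {ω | Y2 ω = true} ({ω | S2 ω = true} ∩ {ω | S1 ω = false}) := by
  have hset : {ω | Y2 ω = true} ∩ ({ω | S2 ω = true} ∩ {ω | S1 ω = false})
      = {ω | Y20 ω = true} ∩ ({ω | S1 ω = false} ∩ {ω | S2 ω = true}) := by
    ext ω
    simp only [Set.mem_inter_iff, Set.mem_setOf_eq]
    constructor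
    · rintro ⟨hy, hs2, hs1⟩
      exact ⟨(hconsist ω hs1) ▸ hy, hs1, hs2⟩
    · rintro ⟨hy, hs1, hs2⟩
      exact ⟨(hconsist ω hs1).symm ▸ hy, hs2, hs1⟩
  have hcomm : {ω | S2 ω = true} ∩ {ω | S1 ω = false}
      = {ω | S1 ω = false} ∩ {ω | S2 ω = true} := Set.inter_comm _ _
  rw [cpr, hset, hindep true false true, hcomm]
  rw [hcomm] at hpos
  exact (mul_div_cancel_right₀ _ (ne_of_gt hpos)).symm
end

section
/- In the case-cohort setting, let S_∅, S_A, S_AY be {0,1}-valued random variables with {S_A=1} ⊆ {S_∅=1} and {S_AY=1} ⊆ {S_∅=1}, and let A, Y be {0,1}-valued. Assume: (i) S_A ⫫ A | (S_∅=1); (ii) S_AY ⫫ A | (Y, S_∅=1); (iii) Y^a ⫫ A | (S_∅=1) and Y = Y^a on {A=a} (exchangeability and consistency within the base cohort); (iv) positivity of all conditioning events used. Then for a in {0,1}: P[Y^a=1 | S_∅=1] = P[A=a | Y=1, S_AY=1] · P[Y=1 | S_∅=1] / P[A=a | S_A=1]. -/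
open MeasureTheory BigOperators

variable {Ω : Type*} [MeasurableSpace Ω]

lemma key_lemma (μ : Measure Ω) (S A B : Set Ω) (hB : pr μ B > 0) (hSB : pr μ (S ∩ B) > 0)
    (hInd : cpr μ (S ∩ A) B = cpr μ S B * cpr μ A B) :
    cpr μ A (S ∩ B) = cpr μ A B := by
  unfold cpr at *
  have h1 : A ∩ (S ∩ B) = (S ∩ A) ∩ B := by ext ω; simp only [Set.mem_inter_iff]; tauto
  rw [h1, div_eq_div_iff hSB.ne' hB.ne']
  rw [div_eq_iff hB.ne'] at hInd
  rw [hInd]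
  field_simp

/-- Case-cohort identification (Section 4.1):
P[Y^a = 1 | S∅ = 1] = P[A = a | Y = 1, S_AY = 1] P[Y = 1 | S∅ = 1] / P[A = a | S_A = 1]. -/
theorem case_cohort_identification (μ : Measure Ω) [IsProbabilityMeasure μ]
    (S0 SA SAY A Y : Ω → Bool) (Yb : Bool → Ω → Bool)
    (hnestA : {ω | SA ω = true} ⊆ {ω | S0 ω = true})
    (hnestAY : {ω | SAY ω = true} ⊆ {ω | S0 ω = true})
    (hSA : ∀ (s x : Bool),
      cpr μ ({ω | SA ω = s} ∩ {ω | A ω = x}) {ω | S0 ω = true}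
        = cpr μ {ω | SA ω = s} {ω | S0 ω = true} * cpr μ {ω | A ω = x} {ω | S0 ω = true})
    (hSAY : ∀ (s x y : Bool),
      pr μ ({ω | Y ω = y} ∩ {ω | S0 ω = true}) > 0 →
      cpr μ ({ω | SAY ω = s} ∩ {ω | A ω = x}) ({ω | Y ω = y} ∩ {ω | S0 ω = true})
        = cpr μ {ω | SAY ω = s} ({ω | Y ω = y} ∩ {ω | S0 ω = true})
          * cpr μ {ω | A ω = x} ({ω | Y ω = y} ∩ {ω | S0 ω = true}))
    (hexch : ∀ (a y x : Bool),
      cpr μ ({ω | Yb a ω = y} ∩ {ω | A ω = x}) {ω | S0 ω = true}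
        = cpr μ {ω | Yb a ω = y} {ω | S0 ω = true} * cpr μ {ω | A ω = x} {ω | S0 ω = true})
    (hconsist : ∀ (a : Bool) (ω : Ω), A ω = a → Y ω = Yb a ω)
    (hpos0 : pr μ {ω | S0 ω = true} > 0)
    (hposSA : pr μ {ω | SA ω = true} > 0)
    (hposAY : pr μ ({ω | Y ω = true} ∩ {ω | SAY ω = true}) > 0)
    (hposY : pr μ ({ω | Y ω = true} ∩ {ω | S0 ω = true}) > 0)
    (hposA : ∀ (a : Bool), pr μ ({ω | A ω = a} ∩ {ω | S0 ω = true}) > 0)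
    (hposASA : ∀ (a : Bool), cpr μ {ω | A ω = a} {ω | SA ω = true} > 0) :
    ∀ (a : Bool),
      cpr μ {ω | Yb a ω = true} {ω | S0 ω = true}
        = cpr μ {ω | A ω = a} ({ω | Y ω = true} ∩ {ω | SAY ω = true})
            * cpr μ {ω | Y ω = true} {ω | S0 ω = true}
            / cpr μ {ω | A ω = a} {ω | SA ω = true} := by
  intro a
  set B0 := {ω | S0 ω = true} with hB0
  set BY := {ω | Y ω = true} ∩ B0 with hBY
  -- step 3: P[A=a | SA=1] = P[A=a | S0=1]
  have hSAset : {ω | SA ω = true} ∩ B0 = {ω | SA ω = true} := Set.inter_eq_left.mpr hnestA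
  have hprSA : pr μ ({ω | SA ω = true} ∩ B0) > 0 := by rw [hSAset]; exact hposSA
  have step3 : cpr μ {ω | A ω = a} {ω | SA ω = true} = cpr μ {ω | A ω = a} B0 := by
    have h := key_lemma μ {ω | SA ω = true} {ω | A ω = a} B0 hpos0 hprSA (hSA true a)
    rwa [hSAset] at h
  -- step 2: P[A=a | Y=1, SAY=1] = P[A=a | Y=1, S0=1]
  have hAYset : {ω | SAY ω = true} ∩ BY = {ω | Y ω = true} ∩ {ω | SAY ω = true} := by
    ext ω
    constructor
    · rintro ⟨h1, h2, h3⟩; exact ⟨h2, h1⟩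
    · rintro ⟨h1, h2⟩; exact ⟨h2, h1, hnestAY h2⟩
  have hprAY : pr μ ({ω | SAY ω = true} ∩ BY) > 0 := by rw [hAYset]; exact hposAY
  have step2 : cpr μ {ω | A ω = a} ({ω | Y ω = true} ∩ {ω | SAY ω = true})
      = cpr μ {ω | A ω = a} BY := by
    have h := key_lemma μ {ω | SAY ω = true} {ω | A ω = a} BY hposY hprAY
      (hSAY true a true hposY)
    rwa [hAYset] at h
  -- consistency
  have hYbA : {ω | Yb a ω = true} ∩ {ω | A ω = a} = {ω | Y ω = true} ∩ {ω | A ω = a} := by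
    ext ω
    simp only [Set.mem_inter_iff, Set.mem_setOf_eq]
    constructor
    · rintro ⟨h1, h2⟩; exact ⟨(hconsist a ω h2).trans h1, h2⟩
    · rintro ⟨h1, h2⟩; exact ⟨(hconsist a ω h2).symm.trans h1, h2⟩
  have hexch' := hexch a true a
  rw [hYbA] at hexch'
  have hcprA0 : cpr μ {ω | A ω = a} B0 > 0 := div_pos (hposA a) hpos0
  have prod : cpr μ {ω | A ω = a} BY * cpr μ {ω | Y ω = true} B0
      = cpr μ ({ω | Y ω = true} ∩ {ω | A ω = a}) B0 := by
    unfold cpr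
    have h2 : {ω | A ω = a} ∩ BY = ({ω | Y ω = true} ∩ {ω | A ω = a}) ∩ B0 := by
      rw [hBY]; ext ω; simp only [Set.mem_inter_iff]; tauto
    rw [h2, hBY]
    rw [div_mul_div_comm]
    rw [div_eq_div_iff (by positivity) (by exact hpos0.ne')]
    ring
  rw [step2, step3, prod, hexch']
  rw [mul_div_assoc, div_self hcprA0.ne', mul_one]
end
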